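/- arXiv:2410.05136 — 2 statements merged into one kernel-verified Lean document; each statement's English description precedes it below -/
import Mathlib

section
/- Fix integers n ≥ T ≥ 1 and a filter f : Fin T → ℝ. Define the autocorrelations c_i := Σ_{k=0}^{T−1−i} f_k · f_{k+i} for 0 ≤ i ≤ T−1 (so c₀ = Σ_{k=0}^{T−1} f_k² = ‖f‖₂²), and for j ∈ {0, 1, …, n−1} define q_j := c₀ + 2·Σ_{i=1}^{T−1} c_i · cos(2π·j·i/n). Let σ_1 ≥ σ_2 ≥ … ≥ σ_n be the values q_0, …, q_{n−1} listed in non-increasing order. Then for all indices j and p with 1 ≤ j and j + p ≤ n (p ≥ 0), σ_j − σ_{j+p} ≤ π · ‖f‖₂² · T² · (p + 1) / n. -/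
/-!
Each `q j` is the value at `x = j` of the cosine polynomial `c₀ + 2 ∑ cᵢ cos (2π x i / n)`. By
Cauchy–Schwarz `|cᵢ| ≤ c₀ = ‖f‖²`, so this polynomial is Lipschitz in `x` with constant
`2π ‖f‖² T² / n`, and it is symmetric under `x ↦ n - x`. Take indices `u, v ≤ n / 2` with
`q u ≥ σⱼ`, `q v ≤ σ_{j+p}` and no index of that kind strictly between them. Every `t` strictly
between `u` and `v` then has `σ_{j+p} < q t < σⱼ`, as does its mirror `n - t`; at most `p - 1`
of the values `q 0, …, q (n-1)` lie strictly between `σ_{j+p}` and `σⱼ`, so `2 |u - v| ≤ p + 1`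
and the Lipschitz bound gives the claim.
-/

open Finset Real

theorem abs_sum_range_mul_shift_le_sum_sq (F : ℕ → ℝ) (T i : ℕ) :
    |∑ k ∈ range (T - i), F k * F (k + i)| ≤ ∑ k ∈ range T, F k ^ 2 := by
  have hnonneg : 0 ≤ ∑ k ∈ range T, F k ^ 2 := sum_nonneg fun k _ => sq_nonneg _
  have hhead : ∑ k ∈ range (T - i), F k ^ 2 ≤ ∑ k ∈ range T, F k ^ 2 :=
    sum_le_sum_of_subset_of_nonneg (range_subset_range.2 (Nat.sub_le T i))
      fun k _ _ => sq_nonneg _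
  have htail : ∑ k ∈ range (T - i), F (k + i) ^ 2 ≤ ∑ k ∈ range T, F k ^ 2 := by
    simp_rw [add_comm _ i, ← sum_Ico_eq_sum_range (fun k => F k ^ 2)]
    exact sum_le_sum_of_subset_of_nonneg
      (fun k hk => by simp only [mem_Ico, mem_range] at hk ⊢; omega)
      fun k _ _ => sq_nonneg _
  refine abs_le_of_sq_le_sq ?_ hnonneg
  calc (∑ k ∈ range (T - i), F k * F (k + i)) ^ 2
      ≤ (∑ k ∈ range (T - i), F k ^ 2) * ∑ k ∈ range (T - i), F (k + i) ^ 2 :=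
        sum_mul_sq_le_sq_mul_sq _ _ _
    _ ≤ (∑ k ∈ range T, F k ^ 2) ^ 2 := by
        rw [sq]; exact mul_le_mul hhead htail (sum_nonneg fun k _ => sq_nonneg _) hnonneg

theorem abs_sum_mul_cos_sub_sum_mul_cos_le {ι : Type*} (s : Finset ι) (c x y : ι → ℝ) :
    |∑ i ∈ s, c i * cos (x i) - ∑ i ∈ s, c i * cos (y i)| ≤ ∑ i ∈ s, |c i| * |x i - y i| := by
  rw [← sum_sub_distrib]
  refine (abs_sum_le_sum_abs _ _).trans (sum_le_sum fun i _ => ?_)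
  rw [← mul_sub, abs_mul]
  exact mul_le_mul_of_nonneg_left (abs_cos_sub_cos_le _ _) (abs_nonneg _)

theorem two_mul_sum_Icc_one_sub_one_le_sq (T : ℕ) :
    2 * ∑ i ∈ Icc 1 (T - 1), (i : ℝ) ≤ T ^ 2 := by
  have hsub : ∑ i ∈ Icc 1 (T - 1), i ≤ ∑ i ∈ range T, i :=
    sum_le_sum_of_subset fun i hi => by simp only [mem_Icc, mem_range] at hi ⊢; omega
  have hnat : 2 * ∑ i ∈ Icc 1 (T - 1), i ≤ T ^ 2 := by
    nlinarith [sum_range_id_mul_two T, Nat.sub_le T 1]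
  simpa using (Nat.cast_le (α := ℝ)).2 hnat

theorem cos_two_pi_mul_natCast_sub_mul_div (n t i : ℕ) (ht : t ≤ n) :
    cos (2 * π * ↑(n - t) * i / n) = cos (2 * π * t * i / n) := by
  rcases n.eq_zero_or_pos with rfl | hn
  · obtain rfl : t = 0 := by omega
    rfl
  rw [Nat.cast_sub ht, ← cos_nat_mul_two_pi_sub _ i]
  congr 1
  field_simp
  ring

theorem sub_le_of_eq_cos_sum {n T : ℕ} {c : ℕ → ℝ} {C : ℝ} (hC0 : 0 ≤ C)
    (hC : ∀ i ∈ Icc 1 (T - 1), |c i| ≤ C) {q : ℕ → ℝ}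
    (hq : ∀ j, q j = c 0 + 2 * ∑ i ∈ Icc 1 (T - 1), c i * cos (2 * π * j * i / n)) (s t : ℕ) :
    q s - q t ≤ 2 * π * C * T ^ 2 / n * |(s : ℝ) - t| := by
  have hfreq : ∀ i : ℕ,
      |2 * π * s * i / n - 2 * π * t * i / n| = 2 * π / n * |(s : ℝ) - t| * i := fun i => by
      rw [show 2 * π * s * i / n - 2 * π * t * i / n = 2 * π / n * ((s : ℝ) - t) * i by ring,
        abs_mul, abs_mul, abs_of_nonneg (by positivity), Nat.abs_cast]
  calc q s - q t = 2 * (∑ i ∈ Icc 1 (T - 1), c i * cos (2 * π * s * i / n)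
        - ∑ i ∈ Icc 1 (T - 1), c i * cos (2 * π * t * i / n)) := by rw [hq, hq]; ring
    _ ≤ 2 * ∑ i ∈ Icc 1 (T - 1), |c i| * |2 * π * s * i / n - 2 * π * t * i / n| := by
        gcongr
        exact (le_abs_self _).trans (abs_sum_mul_cos_sub_sum_mul_cos_le _ _ _ _)
    _ ≤ 2 * ∑ i ∈ Icc 1 (T - 1), C * (2 * π / n * |(s : ℝ) - t| * i) := by
        gcongr with i hi
        · exact hC i hi
        · rw [hfreq]
    _ = 2 * π * C / n * |(s : ℝ) - t| * (2 * ∑ i ∈ Icc 1 (T - 1), (i : ℝ)) := by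
        rw [mul_sum, mul_sum, mul_sum]; congr 1; ext i; ring
    _ ≤ 2 * π * C / n * |(s : ℝ) - t| * T ^ 2 := by
        gcongr; exact two_mul_sum_Icc_one_sub_one_le_sq T
    _ = 2 * π * C * T ^ 2 / n * |(s : ℝ) - t| := by ring

theorem Nat.exists_forall_between_not {P Q : ℕ → Prop} {a b : ℕ} (ha : P a) (hb : Q b) :
    ∃ u v, P u ∧ Q v ∧ ∀ t, min u v < t → t < max u v → ¬P t ∧ ¬Q t := by
  classical
  have hex : ∃ d u v, P u ∧ Q v ∧ u ≤ v + d ∧ v ≤ u + d :=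
    ⟨a + b, a, b, ha, hb, by omega, by omega⟩
  obtain ⟨u, v, hu, hv, hud, hvd⟩ := Nat.find_spec hex
  refine ⟨u, v, hu, hv, fun t hut htv => ⟨fun ht => ?_, fun ht => ?_⟩⟩
  · have := Nat.find_min' hex (m := t - v + (v - t)) ⟨t, v, ht, hv, by omega, by omega⟩
    omega
  · have := Nat.find_min' hex (m := t - u + (u - t)) ⟨u, t, hu, ht, by omega, by omega⟩
    omega

theorem Antitone.card_le_of_forall_mem_lt_lt {α : Type*} [Preorder α] {n : ℕ} {σ : Fin n → α}
    (hσ : Antitone σ) {k l : Fin n} {S : Finset (Fin n)}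
    (hS : ∀ i ∈ S, σ l < σ i ∧ σ i < σ k) : #S ≤ l - k - 1 := by
  rw [← Fin.card_Ioo]
  refine card_le_card fun i hi =>
    mem_Ioo.2 ⟨lt_of_not_ge fun hik => ?_, lt_of_not_ge fun hli => ?_⟩
  · exact (hσ hik).not_gt (hS i hi).2
  · exact (hσ hli).not_gt (hS i hi).1

theorem Antitone.two_mul_sub_le_of_reflect {α : Type*} [Preorder α] {n : ℕ} {g : ℕ → α}
    {σ : Fin n → α} (hσ : Antitone σ) (e : Fin n ≃ Fin n)
    (he : ∀ i, σ i = g (e i)) (hrefl : ∀ t ≤ n, g (n - t) = g t) {k l : Fin n} {u v : ℕ}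
    (hv : v ≤ n / 2) (hbetween : ∀ t, u < t → t < v → σ l < g t ∧ g t < σ k) :
    2 * (v - u - 1) ≤ l - k - 1 := by
  set A := Ioo u v
  have hdisj : Disjoint A (A.image (n - ·)) := by
    simp only [A, disjoint_left, mem_image, mem_Ioo]
    omega
  have hmem : ∀ m ∈ A ∪ A.image (n - ·), m < n ∧ σ l < g m ∧ g m < σ k := by
    simp only [A, mem_union, mem_image, mem_Ioo]
    rintro m (⟨hum, hmv⟩ | ⟨t, ⟨hut, htv⟩, rfl⟩)
    · exact ⟨by omega, hbetween m hum hmv⟩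
    · rw [hrefl t (by omega)]
      exact ⟨by omega, hbetween t hut htv⟩
  have hcard : #(A ∪ A.image (n - ·)) = 2 * (v - u - 1) := by
    rw [card_union_of_disjoint hdisj, card_image_of_injOn, Nat.card_Ioo]
    · ring
    · intro s hs t ht hst
      simp only [A, coe_Ioo, Set.mem_Ioo] at hs ht hst
      omega
  rw [← hcard, ← card_attachFin _ fun m hm => (hmem m hm).1,
    ← card_map e.symm.toEmbedding]
  refine hσ.card_le_of_forall_mem_lt_lt fun i hi => ?_
  obtain ⟨m, hm, rfl⟩ := mem_map.1 hi
  rw [Equiv.toEmbedding_apply, he (e.symm m), Equiv.apply_symm_apply]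
  exact (hmem m ((mem_attachFin _).1 hm)).2

theorem Antitone.sub_le_of_reflect_of_lipschitz {n : ℕ} {σ : Fin n → ℝ} {g : ℕ → ℝ} {L : ℝ}
    (hσ : Antitone σ) (e : Fin n ≃ Fin n) (he : ∀ i, σ i = g (e i))
    (hrefl : ∀ t ≤ n, g (n - t) = g t) (hL : 0 ≤ L)
    (hlip : ∀ s t, s ≤ n / 2 → t ≤ n / 2 → g s - g t ≤ L * |(s : ℝ) - t|)
    {k l : Fin n} (hkl : k ≤ l) : σ k - σ l ≤ L * ((l : ℝ) - k + 1) / 2 := by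
  rcases (hσ hkl).eq_or_lt with heq | hlt
  · have hkl' : (k : ℝ) ≤ l := by exact_mod_cast hkl
    rw [heq, sub_self]
    exact div_nonneg (mul_nonneg hL (by linarith)) zero_le_two
  have hfold : ∀ i, ∃ t ≤ n / 2, g t = σ i := by
    intro i
    rw [he]
    by_cases h : (e i : ℕ) ≤ n / 2
    · exact ⟨_, h, rfl⟩
    · exact ⟨n - e i, by omega, hrefl _ (e i).2.le⟩
  obtain ⟨a, ha, hga⟩ := hfold k
  obtain ⟨b, hb, hgb⟩ := hfold l
  obtain ⟨u, v, ⟨hu, hgu⟩, ⟨hv, hgv⟩, hbetween⟩ :=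
    Nat.exists_forall_between_not (P := fun t => t ≤ n / 2 ∧ σ k ≤ g t)
      (Q := fun t => t ≤ n / 2 ∧ g t ≤ σ l) ⟨ha, hga.ge⟩ ⟨hb, hgb.le⟩
  have huv : u ≠ v := by
    rintro rfl
    linarith
  have hkl_lt : (k : ℕ) < l := hkl.lt_of_ne (by rintro rfl; exact hlt.false)
  have hcount := hσ.two_mul_sub_le_of_reflect e he hrefl (k := k) (l := l)
    (u := min u v) (v := max u v) (by omega) fun t h1 h2 => by
      have := hbetween t h1 h2
      simp only [not_and, not_le] at this
      exact ⟨this.2 (by omega), this.1 (by omega)⟩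
  have hdist : |(u : ℝ) - v| ≤ ((l : ℝ) - k + 1) / 2 := by
    have h1 : (2 * u + k : ℝ) ≤ 2 * v + l + 1 := by
      exact_mod_cast (by omega : 2 * u + k ≤ 2 * v + l + 1)
    have h2 : (2 * v + k : ℝ) ≤ 2 * u + l + 1 := by
      exact_mod_cast (by omega : 2 * v + k ≤ 2 * u + l + 1)
    exact abs_sub_le_iff.2 ⟨by linarith, by linarith⟩
  calc σ k - σ l ≤ g u - g v := by linarith
    _ ≤ L * |(u : ℝ) - v| := hlip u v hu hv
    _ ≤ L * (((l : ℝ) - k + 1) / 2) := by gcongr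
    _ = L * ((l : ℝ) - k + 1) / 2 := by ring

/-- **Corollary A.2.** For the squared singular values `q j = c₀ + 2 ∑_{i=1}^{T-1} cᵢ cos(2πji/n)`
of a single-channel circular convolution with filter `f` of length `T` on inputs of length `n`,
sorted non-increasingly as `σ₁ ≥ … ≥ σₙ`, one has `σⱼ − σ_{j+p} ≤ π ‖f‖₂² T² (p+1) / n`. -/
theorem conv_sq_singular_pair_gap (n T : ℕ) (f : Fin T → ℝ)
    (F : ℕ → ℝ) (hF : ∀ m (h : m < T), F m = f ⟨m, h⟩)
    (c : ℕ → ℝ) (hc : ∀ i ≤ T - 1, c i = ∑ k ∈ Finset.range (T - i), F k * F (k + i))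
    (q : ℕ → ℝ)
    (hq : ∀ j, q j = c 0 + 2 * ∑ i ∈ Finset.Icc 1 (T - 1),
      c i * Real.cos (2 * π * j * i / n))
    (σ : Fin n → ℝ) (e : Fin n ≃ Fin n)
    (hσ : ∀ i : Fin n, σ i = q (e i)) (hsort : Antitone σ) :
    ∀ j p : ℕ, ∀ _hj1 : 1 ≤ j, ∀ _hjpn : j + p ≤ n,
      σ ⟨j - 1, by omega⟩ - σ ⟨j + p - 1, by omega⟩ ≤
        π * (∑ k, f k ^ 2) * (T : ℝ) ^ 2 * (p + 1) / n := by
  intro j p hj hjp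
  have hnorm : ∑ k, f k ^ 2 = ∑ k ∈ range T, F k ^ 2 := by
    rw [← Fin.sum_univ_eq_sum_range]
    exact sum_congr rfl fun k _ => by rw [hF]
  have hnorm_nonneg : 0 ≤ ∑ k, f k ^ 2 := sum_nonneg fun k _ => sq_nonneg _
  have hc_le : ∀ i ∈ Icc 1 (T - 1), |c i| ≤ ∑ k, f k ^ 2 := fun i hi => by
    rw [hc i (mem_Icc.1 hi).2, hnorm]
    exact abs_sum_range_mul_shift_le_sum_sq F T i
  have hrefl : ∀ t ≤ n, q (n - t) = q t := fun t ht => by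
    simp only [hq, cos_two_pi_mul_natCast_sub_mul_div n t _ ht]
  have hgap := hsort.sub_le_of_reflect_of_lipschitz e hσ hrefl (by positivity)
    (fun s t _ _ => sub_le_of_eq_cos_sum hnorm_nonneg hc_le hq s t)
    (k := ⟨j - 1, by omega⟩) (l := ⟨j + p - 1, by omega⟩) (Fin.mk_le_mk.2 (by omega))
  convert hgap using 1
  rw [Nat.cast_sub (by omega), Nat.cast_sub hj]
  push_cast
  ring
end

section
/- Fix integers n ≥ T ≥ 1 and a filter f : Fin T → ℝ. Define the autocorrelations c_i := Σ_{k=0}^{T−1−i} f_k · f_{k+i} for 0 ≤ i ≤ T−1 (so c₀ = Σ_{k=0}^{T−1} f_k² = ‖f‖₂²), and for an integer j define q_j := c₀ + 2·Σ_{i=1}^{T−1} c_i · cos(2π·j·i/n). Then for all integers j and t, q_j − q_t ≤ 2π · ‖f‖₂² · T² · |t − j| / n. -/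
open Finset Real

/-!
Each `cᵢ` is bounded by `c₀ = ‖f‖₂²` (Cauchy–Schwarz), and `cos` is `1`-Lipschitz, so the
`i`-th term of `q j - q t` is at most `2 c₀ · 2π i |t - j| / n`; summing over `i < T` and using
`∑_{i<T} i ≤ T² / 2` gives the bound.
-/

lemma sum_sq_shift_le_sum_range_sq (F : ℕ → ℝ) (m i : ℕ) :
    ∑ k ∈ range m, F (k + i) ^ 2 ≤ ∑ k ∈ range (m + i), F k ^ 2 := by
  rw [add_comm m, sum_range_add]
  simp only [add_comm i]
  exact le_add_of_nonneg_left (sum_nonneg fun _ _ => sq_nonneg _)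

lemma abs_sum_mul_shift_le_sum_sq (F : ℕ → ℝ) (m i : ℕ) :
    |∑ k ∈ range m, F k * F (k + i)| ≤ ∑ k ∈ range (m + i), F k ^ 2 := by
  set S := ∑ k ∈ range (m + i), F k ^ 2
  have hS : 0 ≤ S := sum_nonneg fun _ _ => sq_nonneg _
  have hunshifted : ∑ k ∈ range m, F k ^ 2 ≤ S := by
    simpa using sum_sq_shift_le_sum_range_sq F m 0 |>.trans
      (sum_le_sum_of_subset_of_nonneg (range_subset_range.2 (m.le_add_right i))
        fun _ _ _ => sq_nonneg _)
  refine abs_le_of_sq_le_sq ?_ hS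
  calc (∑ k ∈ range m, F k * F (k + i)) ^ 2
      ≤ (∑ k ∈ range m, F k ^ 2) * ∑ k ∈ range m, F (k + i) ^ 2 :=
        sum_mul_sq_le_sq_mul_sq _ _ _
    _ ≤ S * S := mul_le_mul hunshifted (sum_sq_shift_le_sum_range_sq F m i)
        (sum_nonneg fun _ _ => sq_nonneg _) hS
    _ = S ^ 2 := (sq S).symm

lemma sum_Icc_one_pred_cast_le (T : ℕ) : ∑ i ∈ Icc 1 (T - 1), (i : ℝ) ≤ (T : ℝ) ^ 2 / 2 := by
  have hsub : Icc 1 (T - 1) ⊆ range T := fun i hi => by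
    rw [mem_Icc] at hi
    rw [mem_range]
    omega
  have hgauss : ((∑ i ∈ range T, i : ℕ) : ℝ) * 2 ≤ (T : ℝ) ^ 2 := by
    rw [← Nat.cast_ofNat, ← Nat.cast_mul, sum_range_id_mul_two, ← Nat.cast_pow, sq]
    exact_mod_cast Nat.mul_le_mul_left T (T.sub_le 1)
  push_cast at hgauss
  linarith [sum_le_sum_of_subset_of_nonneg hsub fun (i : ℕ) _ _ => (i.cast_nonneg : (0 : ℝ) ≤ i)]

lemma sum_mul_cos_sub_cos_le (s : Finset ℕ) (c : ℕ → ℝ) {C : ℝ} (hc : ∀ i ∈ s, |c i| ≤ C)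
    (x y : ℝ) :
    ∑ i ∈ s, c i * (cos (x * i) - cos (y * i)) ≤ C * |x - y| * ∑ i ∈ s, (i : ℝ) := by
  rw [mul_sum]
  refine sum_le_sum fun i hi => ?_
  have hcos : |cos (x * i) - cos (y * i)| ≤ |x - y| * i := by
    simpa [← sub_mul, abs_mul] using abs_cos_sub_cos_le (x * i) (y * i)
  calc c i * (cos (x * i) - cos (y * i))
      ≤ |c i| * |cos (x * i) - cos (y * i)| := (le_abs_self _).trans (abs_mul _ _).le
    _ ≤ C * (|x - y| * i) :=
        mul_le_mul (hc i hi) hcos (abs_nonneg _) ((abs_nonneg _).trans (hc i hi))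
    _ = C * |x - y| * i := by ring

theorem conv_sq_singular_fourier_gap_general (n T : ℕ) (f : Fin T → ℝ)
    (F : ℕ → ℝ) (hF : ∀ m (h : m < T), F m = f ⟨m, h⟩)
    (c : ℕ → ℝ) (hc : ∀ i ≤ T - 1, c i = ∑ k ∈ Finset.range (T - i), F k * F (k + i))
    (q : ℤ → ℝ)
    (hq : ∀ j : ℤ, q j = c 0 + 2 * ∑ i ∈ Finset.Icc 1 (T - 1),
      c i * Real.cos (2 * π * j * i / n)) :
    ∀ j t : ℤ, q j - q t ≤
      2 * π * (∑ k, f k ^ 2) * (T : ℝ) ^ 2 * (|t - j| : ℤ) / n := by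
  intro j t
  have hc₀_range : c 0 = ∑ k ∈ range T, F k ^ 2 := by simp [hc 0, sq]
  have hc₀ : c 0 = ∑ k, f k ^ 2 := by
    rw [hc₀_range, ← Fin.sum_univ_eq_sum_range]
    exact sum_congr rfl fun k _ => by rw [hF k k.isLt]
  have hc_le : ∀ i ∈ Icc 1 (T - 1), |c i| ≤ c 0 := fun i hi => by
    have hiT : T - i + i = T := by rw [mem_Icc] at hi; omega
    simpa [hc i (mem_Icc.1 hi).2, hc₀_range, hiT] using abs_sum_mul_shift_le_sum_sq F (T - i) i
  have hgap : q j - q t = 2 * ∑ i ∈ Icc 1 (T - 1),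
      c i * (cos (2 * π * j / n * i) - cos (2 * π * t / n * i)) := by
    simp only [hq, mul_sub, sum_sub_distrib, div_mul_eq_mul_div, mul_right_comm _ _ ((_ : ℕ) : ℝ)]
    ring
  have hdist : |2 * π * j / n - 2 * π * t / n| = 2 * π * ((|t - j| : ℤ) : ℝ) / n := by
    rw [← sub_div, ← mul_sub, abs_div, abs_mul, Nat.abs_cast, abs_of_pos two_pi_pos]
    push_cast
    rw [abs_sub_comm]
  have hc₀_nonneg : 0 ≤ c 0 := hc₀ ▸ sum_nonneg fun _ _ => sq_nonneg _
  rw [hgap, ← hc₀]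
  calc 2 * ∑ i ∈ Icc 1 (T - 1), c i * (cos (2 * π * j / n * i) - cos (2 * π * t / n * i))
      ≤ 2 * (c 0 * |2 * π * j / n - 2 * π * t / n| * ((T : ℝ) ^ 2 / 2)) := by
        gcongr
        exact (sum_mul_cos_sub_cos_le _ c hc_le _ _).trans
          (mul_le_mul_of_nonneg_left (sum_Icc_one_pred_cast_le T) (by positivity))
    _ = _ := by rw [hdist]; ring

/-- **Pairwise gap of squared singular values** (from the proof of Lemma A.1): for
`q j = c₀ + 2 ∑_{i=1}^{T-1} cᵢ cos(2πji/n)`, the squared singular values of a single-channel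
circular convolution with filter `f` of length `T` on inputs of length `n`, one has
`q j − q t ≤ 2π ‖f‖₂² T² |t − j| / n` for all integer Fourier indices `j, t`. -/
theorem conv_sq_singular_fourier_gap (n T : ℕ) (hT : 1 ≤ T) (hn : T ≤ n) (f : Fin T → ℝ)
    (F : ℕ → ℝ) (hF : ∀ m (h : m < T), F m = f ⟨m, h⟩) (hF0 : ∀ m, T ≤ m → F m = 0)
    (c : ℕ → ℝ) (hc : ∀ i ≤ T - 1, c i = ∑ k ∈ Finset.range (T - i), F k * F (k + i))
    (q : ℤ → ℝ)
    (hq : ∀ j : ℤ, q j = c 0 + 2 * ∑ i ∈ Finset.Icc 1 (T - 1),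
      c i * Real.cos (2 * π * j * i / n)) :
    ∀ j t : ℤ, q j - q t ≤
      2 * π * (∑ k, f k ^ 2) * (T : ℝ) ^ 2 * (|t - j| : ℤ) / n :=
  conv_sq_singular_fourier_gap_general n T f F hF c hc q hq
end
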